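/- Let d be a finite index set with |d| ≥ 2, A ≠ 0 a real number, γ_j real numbers for j ∈ d, and for each nonempty subset x ⊆ d let c_x be a real number (representing I_k(x)/n). Define γ = Σ_{k=1}^{|d|} (-1)^{k-1} Σ_{|x|=k} c_x, and assume c_{{j}} = γ_j for singletons. Then the equation 1 - γ/A = ∏_{j ∈ d} (1 - γ_j/A) holds if and only if Σ_{k=2}^{|d|} (-1)^k Σ_{x ⊆ d, |x| = k} ( c_x - (∏_{j ∈ x} γ_j)/A^{k-1} ) = 0. -/

import Mathlib

/-!
Expanding the product, `∏ (1 - γ j / A) = 1 + ∑_{k ≥ 1} (-1)^k e_k / A^k` with `e_k` the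
elementary symmetric sums of the `γ j`, while `1 - γ / A = 1 + ∑_{k ≥ 1} (-1)^k C_k / A` with
`C_k = ∑_{|x| = k} c x`. Hence the difference of the two sides is
`A⁻¹ * ∑_{k ≥ 1} (-1)^k (C_k - e_k / A^(k-1))`, whose `k = 1` term vanishes since `c {j} = γ j`.
-/

open Finset

theorem Finset.prod_one_sub_eq_sum_powersetCard {ι R : Type*} [CommRing R]
    (s : Finset ι) (a : ι → R) :
    ∏ i ∈ s, (1 - a i) =
      ∑ k ∈ range (#s + 1), (-1) ^ k * ∑ t ∈ powersetCard k s, ∏ i ∈ t, a i := by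
  simp_rw [sub_eq_add_neg, prod_one_add, sum_powerset, mul_sum]
  refine sum_congr rfl fun k _ => sum_congr rfl fun t ht => ?_
  rw [prod_neg, (mem_powersetCard.mp ht).2]

theorem Finset.prod_one_sub_div_eq {ι K : Type*} [Field K] (s : Finset ι) (a : ι → K) (A : K) :
    ∏ i ∈ s, (1 - a i / A) =
      1 + ∑ k ∈ Icc 1 #s, (-1) ^ k * ((∑ t ∈ powersetCard k s, ∏ i ∈ t, a i) / A ^ k) := by
  rw [prod_one_sub_eq_sum_powersetCard, Nat.range_succ_eq_Icc_zero,
    ← insert_Icc_add_one_left_eq_Icc (Nat.zero_le _), sum_insert (by simp), powersetCard_zero]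
  simp only [pow_zero, sum_singleton, prod_empty, one_mul, sum_div]
  congr 1
  refine sum_congr rfl fun k _ => congr_arg _ (sum_congr rfl fun t ht => ?_)
  rw [prod_div_distrib, prod_const, (mem_powersetCard.mp ht).2]

theorem neg_one_pow_pred_div_sub {K : Type*} [Field K] {A : K} (hA : A ≠ 0) {k : ℕ} (hk : 1 ≤ k)
    (C E : K) :
    -((-1) ^ (k - 1) * C / A) - (-1) ^ k * (E / A ^ k) =
      A⁻¹ * ((-1) ^ k * (C - E / A ^ (k - 1))) := by
  obtain ⟨m, rfl⟩ := Nat.exists_eq_add_of_le' hk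
  simp only [Nat.add_sub_cancel, pow_succ]
  field_simp
  ring

theorem one_sub_div_sub_prod_one_sub_div {ι K : Type*} [Field K] (s : Finset ι) {A : K}
    (hA : A ≠ 0) (a : ι → K) (c : Finset ι → K) :
    1 - (∑ k ∈ Icc 1 #s, (-1) ^ (k - 1) * ∑ t ∈ powersetCard k s, c t) / A -
        ∏ i ∈ s, (1 - a i / A) =
      A⁻¹ * ∑ k ∈ Icc 1 #s, (-1) ^ k *
        ∑ t ∈ powersetCard k s, (c t - (∏ i ∈ t, a i) / A ^ (k - 1)) := by
  rw [prod_one_sub_div_eq, mul_sum, sum_div]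
  have hterm : ∀ k ∈ Icc 1 #s, A⁻¹ * ((-1) ^ k *
      ∑ t ∈ powersetCard k s, (c t - (∏ i ∈ t, a i) / A ^ (k - 1))) =
      -((-1) ^ (k - 1) * (∑ t ∈ powersetCard k s, c t) / A) -
        (-1) ^ k * ((∑ t ∈ powersetCard k s, ∏ i ∈ t, a i) / A ^ k) := by
    intro k hk
    rw [neg_one_pow_pred_div_sub hA (mem_Icc.mp hk).1, sum_sub_distrib, sum_div]
  rw [sum_congr rfl hterm, sum_sub_distrib, sum_neg_distrib]
  ring

theorem sum_powersetCard_one_sub_prod_div_eq_zero {ι K : Type*} [Field K] (s : Finset ι) (A : K)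
    (a : ι → K) (c : Finset ι → K) (hsingle : ∀ j ∈ s, c {j} = a j) :
    ∑ t ∈ powersetCard 1 s, (c t - (∏ i ∈ t, a i) / A ^ (1 - 1)) = 0 := by
  rw [powersetCard_one, sum_map]
  exact sum_eq_zero fun j hj => by simp [hsingle j hj]

theorem stmt_2_general {α : Type*} (d : Finset α)
    (A : ℝ) (hA : A ≠ 0) (γ : α → ℝ) (c : Finset α → ℝ)
    (hsingle : ∀ j ∈ d, c {j} = γ j) :
    (1 - (∑ k ∈ Finset.Icc 1 d.card, (-1 : ℝ) ^ (k - 1) *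
        ∑ x ∈ d.powerset.filter (fun x => x.card = k), c x) / A =
      ∏ j ∈ d, (1 - γ j / A)) ↔
    ∑ k ∈ Finset.Icc 2 d.card, (-1 : ℝ) ^ k *
        ∑ x ∈ d.powerset.filter (fun x => x.card = k),
          (c x - (∏ j ∈ x, γ j) / A ^ (k - 1)) = 0 := by
  simp only [← powersetCard_eq_filter]
  have hdrop : ∑ k ∈ Icc 2 #d, (-1 : ℝ) ^ k *
      ∑ x ∈ powersetCard k d, (c x - (∏ j ∈ x, γ j) / A ^ (k - 1)) =
      ∑ k ∈ Icc 1 #d, (-1 : ℝ) ^ k *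
      ∑ x ∈ powersetCard k d, (c x - (∏ j ∈ x, γ j) / A ^ (k - 1)) := by
    refine sum_subset (Icc_subset_Icc_left one_le_two) fun k hk hk2 => ?_
    obtain rfl : k = 1 := by simp only [mem_Icc] at hk hk2; omega
    rw [sum_powersetCard_one_sub_prod_div_eq_zero d A γ c hsingle, mul_zero]
  rw [← sub_eq_zero, one_sub_div_sub_prod_one_sub_div d hA, hdrop, mul_eq_zero,
    or_iff_right (inv_ne_zero hA)]

theorem stmt_2 {α : Type*} [DecidableEq α] (d : Finset α) (hd : 2 ≤ d.card)
    (A : ℝ) (hA : A ≠ 0) (γ : α → ℝ) (c : Finset α → ℝ)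
    (hsingle : ∀ j ∈ d, c {j} = γ j) :
    (1 - (∑ k ∈ Finset.Icc 1 d.card, (-1 : ℝ) ^ (k - 1) *
        ∑ x ∈ d.powerset.filter (fun x => x.card = k), c x) / A =
      ∏ j ∈ d, (1 - γ j / A)) ↔
    ∑ k ∈ Finset.Icc 2 d.card, (-1 : ℝ) ^ k *
        ∑ x ∈ d.powerset.filter (fun x => x.card = k),
          (c x - (∏ j ∈ x, γ j) / A ^ (k - 1)) = 0 :=
  stmt_2_general d A hA γ c hsingle
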